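/- Let C be a functor from 𝒳 to chain complexes of R-modules and chain maps. Suppose that for each object X we are given a chain complex ΦX of R-modules, chain maps j_X : ΦX → C(X) and q_X : C(X) → ΦX, and a degree +1 map η_X : C(X) → C(X) satisfying d∘η_X + η_X∘d = j_X∘q_X − id_{C(X)}. For every p-simplex (f₁,…,f_p) with p ≥ 1 define Φ_p(f₁,…,f_p) := q_{X₀}∘C(f₁)∘η_{X₁}∘C(f₂)∘η_{X₂}∘⋯∘η_{X_{p−1}}∘C(f_p)∘j_{X_p}, and let Φ₀(X) be the differential of ΦX. Then Φ = (Φ,Φ₀,Φ₁,Φ₂,…) is an A∞ functor on 𝒳, i.e., the defining A∞ relation holds for every p ≥ 1. -/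

import Mathlib

open CategoryTheory

universe u v w

/-- A `ℤ`-graded `R`-module: a module together with a family of submodules
(the grading). -/
structure GradedMod (R : Type u) [Ring R] where
  carrier : Type v
  [isAddCommGroup : AddCommGroup carrier]
  [isModule : Module R carrier]
  grading : ℤ → Submodule R carrier

attribute [instance] GradedMod.isAddCommGroup GradedMod.isModule

/-- A linear map between graded modules is homogeneous of degree `d`. -/
def HasDeg {R : Type u} [Ring R] {M N : GradedMod R} (d : ℤ)
    (f : M.carrier →ₗ[R] N.carrier) : Prop :=
  ∀ n : ℤ, ∀ x ∈ M.grading n, f x ∈ N.grading (n + d)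

/-- Transport of modules along an equality of indexing objects. -/
def mc {𝒳 : Type w} {R : Type u} [Ring R] (M : 𝒳 → GradedMod R) {a b : 𝒳}
    (h : a = b) : (M a).carrier →ₗ[R] (M b).carrier := by
  subst h; exact LinearMap.id

/-- An infinite composable chain `X 0 ← X 1 ← X 2 ← ⋯` in a category `𝒳`.
A `p`-simplex of `𝒳` is (the beginning of) such a chain. -/
structure Chain (𝒳 : Type w) [Category 𝒳] where
  X : ℕ → 𝒳
  f : ∀ i : ℕ, X (i + 1) ⟶ X i

namespace Chain

variable {𝒳 : Type w} [Category 𝒳]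

/-- The back face starting at the `i`-th object. -/
def back (c : Chain 𝒳) (i : ℕ) : Chain 𝒳 where
  X := fun n => c.X (i + n)
  f := fun n => c.f (i + n)

/-- The face obtained by deleting the object `X j` (`j ≥ 1`) and composing
the two adjacent morphisms. -/
def del (c : Chain 𝒳) (j : ℕ) : Chain 𝒳 where
  X := fun n => if n < j then c.X n else c.X (n + 1)
  f := fun n => by
    show (if n + 1 < j then c.X (n + 1) else c.X (n + 1 + 1)) ⟶
      (if n < j then c.X n else c.X (n + 1))
    by_cases h1 : n + 1 < j
    · rw [if_pos h1, if_pos (Nat.lt_of_succ_lt h1)]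
      exact c.f n
    · rw [if_neg h1]
      by_cases h2 : n < j
      · rw [if_pos h2]
        exact c.f (n + 1) ≫ c.f n
      · rw [if_neg h2]
        exact c.f (n + 1)

theorem back_X (c : Chain 𝒳) (i p : ℕ) (h : i ≤ p) :
    c.X p = (c.back i).X (p - i) := by
  show c.X p = c.X (i + (p - i))
  exact congrArg c.X (by omega)

theorem del_X_zero (c : Chain 𝒳) (j : ℕ) (h : 1 ≤ j) : (c.del j).X 0 = c.X 0 := by
  show (if 0 < j then c.X 0 else c.X 1) = c.X 0
  rw [if_pos (show 0 < j by omega)]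

theorem del_X_top (c : Chain 𝒳) (j p : ℕ) (h : j ≤ p) :
    c.X (p + 1) = (c.del j).X p := by
  show c.X (p + 1) = (if p < j then c.X p else c.X (p + 1))
  rw [if_neg (by omega)]

end Chain

/-- The data of an `A∞` functor on `𝒳` with values in graded `R`-modules:
a graded module `M X` for each object, a degree `-1` map `d = Φ₀` for each
object, and for each `p ≥ 1` and each `p`-simplex (recorded as an infinite
chain, of which only the first `p` morphisms are relevant) a map
`Φ_p(f₁, …, f_p) : M X_p →ₗ M X_0`. -/
structure AInftyData (R : Type u) [Ring R] (𝒳 : Type w) [Category 𝒳] where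
  M : 𝒳 → GradedMod.{u, v} R
  d : ∀ A : 𝒳, (M A).carrier →ₗ[R] (M A).carrier
  op : ∀ (p : ℕ) (c : Chain 𝒳), (M (c.X p)).carrier →ₗ[R] (M (c.X 0)).carrier

/-- The axioms making the data of `Φ` into an `A∞` functor:
`Φ₀` has degree `-1` and squares to zero, `Φ_p` has degree `p - 1` and depends
only on the underlying `p`-simplex, and the `A∞` (Sugawara) relation
`∑_{i=0}^{p} (-1)^i Φ_i(f₁,…,f_i) ∘ Φ_{p-i}(f_{i+1},…,f_p)
  = ∑_{i=1}^{p-1} (-1)^i Φ_{p-1}(f₁,…,f_i f_{i+1},…,f_p)`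
holds for every `p ≥ 1` (below `p = m + 1`). -/
structure IsAInfty {R : Type u} [Ring R] {𝒳 : Type w} [Category 𝒳]
    (Φ : AInftyData R 𝒳) : Prop where
  d_deg : ∀ A : 𝒳, HasDeg (-1) (Φ.d A)
  d_sq : ∀ A : 𝒳, (Φ.d A).comp (Φ.d A) = 0
  op_deg : ∀ (p : ℕ) (c : Chain 𝒳), 1 ≤ p → HasDeg ((p : ℤ) - 1) (Φ.op p c)
  op_eq : ∀ (p : ℕ), 1 ≤ p → ∀ (c c' : Chain 𝒳) (hX : ∀ n, n ≤ p → c.X n = c'.X n),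
    (∀ n, n < p → HEq (c.f n) (c'.f n)) →
    Φ.op p c' =
      (mc Φ.M (hX 0 (Nat.zero_le p))).comp
        ((Φ.op p c).comp (mc Φ.M (hX p (le_refl p)).symm))
  relation : ∀ (m : ℕ) (c : Chain 𝒳),
    (Φ.d (c.X 0)).comp (Φ.op (m + 1) c)
      + ∑ i ∈ (Finset.Ico 1 (m + 1)).attach,
          ((-1 : ℤ) ^ i.1) •
            ((Φ.op i.1 c).comp
              ((Φ.op (m + 1 - i.1) (c.back i.1)).comp
                (mc Φ.M (c.back_X i.1 (m + 1)
                  (by have := Finset.mem_Ico.mp i.2; omega)))))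
      + ((-1 : ℤ) ^ (m + 1)) • ((Φ.op (m + 1) c).comp (Φ.d (c.X (m + 1))))
    = ∑ i ∈ (Finset.Ico 1 (m + 1)).attach,
        ((-1 : ℤ) ^ i.1) •
          ((mc Φ.M (c.del_X_zero i.1
              (by have := Finset.mem_Ico.mp i.2; omega))).comp
            ((Φ.op m (c.del i.1)).comp
              (mc Φ.M (c.del_X_top i.1 m
                (by have := Finset.mem_Ico.mp i.2; omega)))))

section EilenbergMacLane

variable {R : Type u} [Ring R] {𝒳 : Type w} [Category 𝒳]

/-- The middle part `C(f₁) ∘ η_{X₁} ∘ C(f₂) ∘ η_{X₂} ∘ ⋯ ∘ η_{X_{p-1}} ∘ C(f_p)`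
of the Eilenberg–MacLane higher homotopy. -/
def emMid (CM : 𝒳 → GradedMod R)
    (Cmap : ∀ {A B : 𝒳}, (B ⟶ A) → ((CM B).carrier →ₗ[R] (CM A).carrier))
    (η : ∀ A : 𝒳, (CM A).carrier →ₗ[R] (CM A).carrier) :
    ∀ (p : ℕ) (c : Chain 𝒳), (CM (c.X p)).carrier →ₗ[R] (CM (c.X 0)).carrier
  | 0, _ => LinearMap.id
  | 1, c => Cmap (c.f 0)
  | (p + 2), c =>
      (emMid CM Cmap η (p + 1) c).comp
        ((η (c.X (p + 1))).comp (Cmap (c.f (p + 1))))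

set_option linter.unusedSectionVars false
set_option maxHeartbeats 1000000

section MC
variable {R : Type u} [Ring R] {𝒳 : Type w} [Category 𝒳]

lemma mc_self (M : 𝒳 → GradedMod R) {a : 𝒳} (h : a = a) : mc M h = LinearMap.id := rfl

lemma mc_self_apply (M : 𝒳 → GradedMod R) {a : 𝒳} (h : a = a) (x : (M a).carrier) :
    mc M h x = x := rfl

lemma mc_mc_apply (M : 𝒳 → GradedMod R) {a b c : 𝒳} (h1 : a = b) (h2 : b = c)
    (x : (M a).carrier) : mc M h2 (mc M h1 x) = mc M (h1.trans h2) x := by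
  subst h1; subst h2; rfl

lemma mc_nat_apply {M N : 𝒳 → GradedMod R} (φ : ∀ A, (M A).carrier →ₗ[R] (N A).carrier)
    {a b : 𝒳} (h : a = b) (x : (M a).carrier) : φ b (mc M h x) = mc N h (φ a x) := by
  subst h; rfl

lemma Chain.del_f_lt (c : Chain 𝒳) {j n : ℕ} (h : n + 1 < j) :
    HEq ((c.del j).f n) (c.f n) := by
  simp only [Chain.del, h, Nat.lt_of_succ_lt h, dif_pos, eq_mpr_eq_cast]
  exact (cast_heq _ _).trans (cast_heq _ _)

lemma Chain.del_f_eq (c : Chain 𝒳) {j n : ℕ} (h1 : ¬ n + 1 < j) (h2 : n < j) :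
    HEq ((c.del j).f n) (c.f (n + 1) ≫ c.f n) := by
  simp only [Chain.del, h1, h2, dif_neg, dif_pos, eq_mpr_eq_cast, dite_false, dite_true,
    not_false_iff]
  exact (cast_heq _ _).trans (cast_heq _ _)

lemma Chain.del_f_ge (c : Chain 𝒳) {j n : ℕ} (h2 : ¬ n < j) :
    HEq ((c.del j).f n) (c.f (n + 1)) := by
  have h1 : ¬ n + 1 < j := by omega
  simp only [Chain.del, h1, h2, dif_neg, eq_mpr_eq_cast, dite_false, not_false_iff]
  exact (cast_heq _ _).trans (cast_heq _ _)

lemma Chain.del_X_lt (c : Chain 𝒳) {j n : ℕ} (h : n < j) : (c.del j).X n = c.X n := by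
  simp [Chain.del, h]

lemma Chain.del_X_ge (c : Chain 𝒳) {j n : ℕ} (h : ¬ n < j) :
    (c.del j).X n = c.X (n + 1) := by
  simp [Chain.del, h]

lemma Chain.back_del_top (c : Chain 𝒳) (i l : ℕ) :
    (c.back i).X (l + 1) = (c.del i).X (i + l) :=
  c.del_X_top i (i + l) (Nat.le_add_right i l)

lemma HasDeg.comp' {M N P : GradedMod R} {dg df : ℤ}
    {f : N.carrier →ₗ[R] P.carrier} {g : M.carrier →ₗ[R] N.carrier}
    (hf : HasDeg df f) (hg : HasDeg dg g) : HasDeg (dg + df) (f.comp g) := by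
  intro n x hx
  have := hf (n + dg) _ (hg n x hx)
  rwa [add_assoc] at this

lemma HasDeg.congr {M N : GradedMod R} {d d' : ℤ} {f : M.carrier →ₗ[R] N.carrier}
    (h : HasDeg d f) (hd : d = d') : HasDeg d' f := hd ▸ h

end MC

section EMAux
variable {R : Type u} [Ring R] {𝒳 : Type w} [Category 𝒳]
variable (CM : 𝒳 → GradedMod R)
  (Cmap : ∀ {A B : 𝒳}, (B ⟶ A) → ((CM B).carrier →ₗ[R] (CM A).carrier))
  (η : ∀ A : 𝒳, (CM A).carrier →ₗ[R] (CM A).carrier)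

lemma Cmap_congr {A B A' B' : 𝒳} (hA : A = A') (hB : B = B')
    {f : B ⟶ A} {f' : B' ⟶ A'} (hf : HEq f f') :
    Cmap f' = (mc CM hA).comp ((Cmap f).comp (mc CM hB.symm)) := by
  subst hA; subst hB; cases hf; rfl

lemma Cmap_congr_apply {A B A' B' : 𝒳} (hA : A = A') (hB : B = B')
    {f : B ⟶ A} {f' : B' ⟶ A'} (hf : HEq f f') (x : (CM B').carrier) :
    Cmap f' x = mc CM hA (Cmap f (mc CM hB.symm x)) := by
  rw [Cmap_congr CM Cmap hA hB hf]; rfl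

lemma emMid_succ (p : ℕ) (hp : 1 ≤ p) (c : Chain 𝒳) :
    emMid CM Cmap η (p + 1) c =
      (emMid CM Cmap η p c).comp ((η (c.X p)).comp (Cmap (c.f p))) := by
  obtain ⟨k, rfl⟩ : ∃ k, p = k + 1 := ⟨p - 1, by omega⟩
  rfl

lemma emMid_succ_apply (p : ℕ) (hp : 1 ≤ p) (c : Chain 𝒳) (x : (CM (c.X (p+1))).carrier) :
    emMid CM Cmap η (p + 1) c x =
      emMid CM Cmap η p c (η (c.X p) (Cmap (c.f p) x)) := by
  rw [emMid_succ CM Cmap η p hp c]; rfl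

lemma emMid_congrIdx (c : Chain 𝒳) {p p' : ℕ} (h : p = p') :
    emMid CM Cmap η p' c =
      (emMid CM Cmap η p c).comp (mc CM (congrArg c.X h).symm) := by
  subst h; rfl

lemma emMid_congrIdx_apply (c : Chain 𝒳) {p p' : ℕ} (h : p = p')
    (x : (CM (c.X p')).carrier) :
    emMid CM Cmap η p' c x =
      emMid CM Cmap η p c (mc CM (congrArg c.X h).symm x) := by
  rw [emMid_congrIdx CM Cmap η c h]; rfl

lemma emMid_ext : ∀ (p : ℕ) (c c' : Chain 𝒳) (hX : ∀ n, n ≤ p → c.X n = c'.X n),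
    (∀ n, n < p → HEq (c.f n) (c'.f n)) →
    emMid CM Cmap η p c' =
      (mc CM (hX 0 (Nat.zero_le p))).comp
        ((emMid CM Cmap η p c).comp (mc CM (hX p (le_refl p)).symm))
  | 0, c, c', hX, hf => by
    ext x
    simp only [LinearMap.comp_apply]
    rw [show emMid CM Cmap η 0 c' x = x from rfl,
      show ∀ y, emMid CM Cmap η 0 c y = y from fun _ => rfl,
      mc_mc_apply, mc_self_apply]
  | 1, c, c', hX, hf => by
    ext x
    simp only [LinearMap.comp_apply]
    rw [show ∀ y, emMid CM Cmap η 1 c' y = Cmap (c'.f 0) y from fun _ => rfl,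
      show ∀ y, emMid CM Cmap η 1 c y = Cmap (c.f 0) y from fun _ => rfl,
      Cmap_congr_apply CM Cmap (hX 0 (by omega)) (hX 1 (le_refl 1)) (hf 0 (by omega))]
  | (p + 2), c, c', hX, hf => by
    ext x
    simp only [LinearMap.comp_apply]
    rw [emMid_succ_apply CM Cmap η (p+1) (by omega) c',
      emMid_succ_apply CM Cmap η (p+1) (by omega) c,
      Cmap_congr_apply CM Cmap (hX (p+1) (by omega)) (hX (p+2) (le_refl _)) (hf (p+1) (by omega)),
      mc_nat_apply η (hX (p+1) (by omega)),
      emMid_ext (p + 1) c c' (fun n hn => hX n (by omega)) (fun n hn => hf n (by omega))]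
    simp only [LinearMap.comp_apply]
    rw [mc_mc_apply, mc_self_apply]

end EMAux

section EMDel
variable {R : Type u} [Ring R] {𝒳 : Type w} [Category 𝒳]
variable (CM : 𝒳 → GradedMod R)
  (Cmap : ∀ {A B : 𝒳}, (B ⟶ A) → ((CM B).carrier →ₗ[R] (CM A).carrier))
  (η : ∀ A : 𝒳, (CM A).carrier →ₗ[R] (CM A).carrier)

lemma emMid_del : ∀ (_ : ∀ (A B C' : 𝒳) (f : B ⟶ A) (g : C' ⟶ B),
      Cmap (g ≫ f) = (Cmap f).comp (Cmap g))
    (l i : ℕ) (hi : 1 ≤ i) (c : Chain 𝒳)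
    (y : (CM ((c.back i).X (l + 1))).carrier),
    emMid CM Cmap η i c (emMid CM Cmap η (l + 1) (c.back i) y) =
      mc CM (c.del_X_zero i hi)
        (emMid CM Cmap η (i + l) (c.del i)
          (mc CM (c.back_del_top i l) y))
  | hC_comp, 0, 1, hi, c, y => by
    rw [show ∀ z, emMid CM Cmap η 1 (c.back 1) z = Cmap (c.f 1) z from fun _ => rfl,
      show ∀ z, emMid CM Cmap η 1 c z = Cmap (c.f 0) z from fun _ => rfl,
      show ∀ z, emMid CM Cmap η (1 + 0) (c.del 1) z = Cmap ((c.del 1).f 0) z from fun _ => rfl,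
      Cmap_congr_apply CM Cmap (c.del_X_lt (show (0:ℕ) < 1 by omega)).symm
        (c.del_X_ge (show ¬ (1:ℕ) < 1 by omega)).symm
        ((c.del_f_eq (by omega) (by omega)).symm),
      show ∀ z : (CM ((c.back 1).X (0 + 1))).carrier, Cmap (c.f 0) (Cmap (c.f 1) z) = Cmap (c.f 1 ≫ c.f 0) z from
        fun z => by rw [hC_comp]; rfl]
    simp only [mc_mc_apply]
    rfl
  | hC_comp, 0, (k + 2), hi, c, y => by
    rw [show ∀ z, emMid CM Cmap η 1 (c.back (k + 2)) z = Cmap (c.f (k + 2)) z from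
        fun _ => rfl,
      emMid_succ_apply CM Cmap η (k + 1) (by omega) c,
      show ∀ z : (CM ((c.back (k + 2)).X (0 + 1))).carrier, Cmap (c.f (k + 1)) (Cmap (c.f (k + 2)) z) =
        Cmap (c.f (k + 2) ≫ c.f (k + 1)) z from fun z => by rw [hC_comp]; rfl,
      emMid_succ_apply CM Cmap η (k + 1) (by omega) (c.del (k + 2)),
      Cmap_congr_apply CM Cmap (c.del_X_lt (show k + 1 < k + 2 by omega)).symm
        (c.del_X_ge (show ¬ k + 2 < k + 2 by omega)).symm
        ((c.del_f_eq (by omega) (by omega)).symm),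
      mc_nat_apply η ((c.del_X_lt (show k + 1 < k + 2 by omega)).symm),
      emMid_ext CM Cmap η (k + 1) c (c.del (k + 2))
        (fun n hn => (c.del_X_lt (by omega)).symm)
        (fun n hn => (c.del_f_lt (by omega)).symm)]
    simp only [LinearMap.comp_apply, mc_mc_apply]
    rfl
  | hC_comp, (l + 1), i, hi, c, y => by
    rw [emMid_succ_apply CM Cmap η (l + 1) (by omega) (c.back i),
      emMid_del hC_comp l i hi c,
      emMid_congrIdx_apply CM Cmap η (c.del i) (show i + l + 1 = i + (l + 1) from rfl),
      emMid_succ_apply CM Cmap η (i + l) (by omega) (c.del i),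
      Cmap_congr_apply CM Cmap (c.del_X_ge (show ¬ i + l < i by omega)).symm
        (c.del_X_ge (show ¬ i + l + 1 < i by omega)).symm
        ((c.del_f_ge (show ¬ i + l < i by omega)).symm),
      mc_nat_apply η ((c.del_X_ge (show ¬ i + l < i by omega)).symm)]
    simp only [mc_mc_apply]
    rfl

end EMDel

section KeyAux
variable {R : Type u} [Ring R] {𝒳 : Type w} [Category 𝒳]

lemma Chain.back_X' (c : Chain 𝒳) {i k m : ℕ} (h : i + k = m) :
    c.X m = (c.back i).X k := by subst h; rfl

lemma Chain.back_f_heq (c : Chain 𝒳) {i k m : ℕ} (h : i + k = m) :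
    HEq (c.f m) ((c.back i).f k) := by subst h; rfl

lemma Chain.back_X_zero (c : Chain 𝒳) (i : ℕ) : (c.back i).X 0 = c.X i := rfl

def mcb (M : 𝒳 → GradedMod R) (c : Chain 𝒳) (i p : ℕ) :
    (M (c.X p)).carrier →ₗ[R] (M ((c.back i).X (p - i))).carrier :=
  if h : i ≤ p then mc M (c.back_X i p h) else 0

lemma mcb_eq (M : 𝒳 → GradedMod R) (c : Chain 𝒳) {i p : ℕ} (h : i ≤ p) :
    mcb M c i p = mc M (c.back_X i p h) := dif_pos h

def mcd0 (M : 𝒳 → GradedMod R) (c : Chain 𝒳) (i : ℕ) :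
    (M ((c.del i).X 0)).carrier →ₗ[R] (M (c.X 0)).carrier :=
  if h : 1 ≤ i then mc M (c.del_X_zero i h) else 0

lemma mcd0_eq (M : 𝒳 → GradedMod R) (c : Chain 𝒳) {i : ℕ} (h : 1 ≤ i) :
    mcd0 M c i = mc M (c.del_X_zero i h) := dif_pos h

def mcdt (M : 𝒳 → GradedMod R) (c : Chain 𝒳) (i m : ℕ) :
    (M (c.X (m + 1))).carrier →ₗ[R] (M ((c.del i).X m)).carrier :=
  if h : i ≤ m then mc M (c.del_X_top i m h) else 0

lemma mcdt_eq (M : 𝒳 → GradedMod R) (c : Chain 𝒳) {i m : ℕ} (h : i ≤ m) :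
    mcdt M c i m = mc M (c.del_X_top i m h) := dif_pos h

lemma sum_comp' {ι : Type*} (s : Finset ι) {M N P : GradedMod R}
    (f : ι → N.carrier →ₗ[R] P.carrier) (g : M.carrier →ₗ[R] N.carrier) :
    (∑ i ∈ s, f i).comp g = ∑ i ∈ s, (f i).comp g := by
  ext x; simp [LinearMap.sum_apply]

end KeyAux

section Key
variable {R : Type u} [Ring R] {𝒳 : Type w} [Category 𝒳]
variable (CM : 𝒳 → GradedMod R)
  (Cmap : ∀ {A B : 𝒳}, (B ⟶ A) → ((CM B).carrier →ₗ[R] (CM A).carrier))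
  (η : ∀ A : 𝒳, (CM A).carrier →ₗ[R] (CM A).carrier)
  (MΦ : 𝒳 → GradedMod R)
  (j : ∀ A : 𝒳, (MΦ A).carrier →ₗ[R] (CM A).carrier)
  (q : ∀ A : 𝒳, (CM A).carrier →ₗ[R] (MΦ A).carrier)

def keyTerm (c : Chain 𝒳) (n i : ℕ) :
    (CM (c.X (n + 1))).carrier →ₗ[R] (CM (c.X 0)).carrier :=
  ((-1 : ℤ) ^ (i + 1)) •
    ((emMid CM Cmap η i c).comp
      ((((j (c.X i)).comp (q (c.X i))) - LinearMap.id).comp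
        ((mc CM (c.back_X_zero i)).comp
          ((emMid CM Cmap η (n + 1 - i) (c.back i)).comp (mcb CM c i (n + 1))))))

lemma keyTerm_comp (c : Chain 𝒳) (n i : ℕ) (h1 : 1 ≤ i) (h2 : i ≤ n) :
    keyTerm CM Cmap η MΦ j q c (n + 1) i =
      (keyTerm CM Cmap η MΦ j q c n i).comp
        ((η (c.X (n + 1))).comp (Cmap (c.f (n + 1)))) := by
  unfold keyTerm
  rw [LinearMap.smul_comp]
  congr 1
  ext x
  simp only [LinearMap.comp_apply]
  rw [mcb_eq CM c (show i ≤ n + 1 + 1 by omega), mcb_eq CM c (show i ≤ n + 1 by omega),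
    emMid_congrIdx_apply CM Cmap η (c.back i) (show (n + 1 - i) + 1 = n + 1 + 1 - i by omega),
    emMid_succ_apply CM Cmap η (n + 1 - i) (by omega) (c.back i),
    Cmap_congr_apply CM Cmap (c.back_X' (show i + (n + 1 - i) = n + 1 by omega))
      (c.back_X' (show i + ((n + 1 - i) + 1) = n + 1 + 1 by omega))
      (c.back_f_heq (show i + (n + 1 - i) = n + 1 by omega)),
    mc_nat_apply η (c.back_X' (show i + (n + 1 - i) = n + 1 by omega))]
  simp only [mc_mc_apply]
  rfl

lemma keyTerm_last (c : Chain 𝒳) (n : ℕ) :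
    keyTerm CM Cmap η MΦ j q c (n + 1) (n + 1) =
      ((-1 : ℤ) ^ (n + 1 + 1)) •
        ((emMid CM Cmap η (n + 1) c).comp
          ((((j (c.X (n + 1))).comp (q (c.X (n + 1)))) - LinearMap.id).comp
            (Cmap (c.f (n + 1))))) := by
  unfold keyTerm
  congr 1
  ext x
  simp only [LinearMap.comp_apply]
  rw [mcb_eq CM c (show n + 1 ≤ n + 1 + 1 by omega),
    emMid_congrIdx_apply CM Cmap η (c.back (n + 1))
      (show 1 = n + 1 + 1 - (n + 1) by omega)]
  simp only [mc_mc_apply]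
  rfl

lemma key_relation
    (dC : ∀ A : 𝒳, (CM A).carrier →ₗ[R] (CM A).carrier)
    (hC_chain : ∀ (A B : 𝒳) (f : B ⟶ A),
      (dC A).comp (Cmap f) = (Cmap f).comp (dC B))
    (hη : ∀ A : 𝒳,
      (dC A).comp (η A) + (η A).comp (dC A) = (j A).comp (q A) - LinearMap.id) :
    ∀ (n : ℕ) (c : Chain 𝒳),
    (dC (c.X 0)).comp (emMid CM Cmap η (n + 1) c)
      - ((-1 : ℤ) ^ n) • ((emMid CM Cmap η (n + 1) c).comp (dC (c.X (n + 1))))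
    = ∑ i ∈ Finset.Ico 1 (n + 1), keyTerm CM Cmap η MΦ j q c n i
  | 0, c => by
    rw [show Finset.Ico 1 1 = (∅ : Finset ℕ) from rfl, Finset.sum_empty,
      show emMid CM Cmap η 1 c = Cmap (c.f 0) from rfl, pow_zero, one_smul,
      hC_chain, sub_self]
  | (n + 1), c => by
    have hsum : ∑ i ∈ Finset.Ico 1 (n + 1 + 1), keyTerm CM Cmap η MΦ j q c (n + 1) i
        = (∑ i ∈ Finset.Ico 1 (n + 1), keyTerm CM Cmap η MΦ j q c n i).comp
            ((η (c.X (n + 1))).comp (Cmap (c.f (n + 1))))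
          + keyTerm CM Cmap η MΦ j q c (n + 1) (n + 1) := by
      rw [Finset.sum_Ico_succ_top (by omega : 1 ≤ n + 1), sum_comp']
      congr 1
      refine Finset.sum_congr rfl (fun i hi => ?_)
      have hm := Finset.mem_Ico.mp hi
      exact keyTerm_comp CM Cmap η MΦ j q c n i (by omega) (by omega)
    rw [hsum, ← key_relation dC hC_chain hη n c, keyTerm_last,
      emMid_succ CM Cmap η (n + 1) (by omega) c]
    have hCc : ∀ y, Cmap (c.f (n + 1)) (dC (c.X (n + 1 + 1)) y)
        = dC (c.X (n + 1)) (Cmap (c.f (n + 1)) y) := by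
      intro y
      have := LinearMap.congr_fun (hC_chain (c.X (n + 1)) (c.X (n + 1 + 1)) (c.f (n + 1))) y
      simpa using this.symm
    have hηc : ∀ y, η (c.X (n + 1)) (dC (c.X (n + 1)) y)
        = j (c.X (n + 1)) (q (c.X (n + 1)) y) - y - dC (c.X (n + 1)) (η (c.X (n + 1)) y) := by
      intro y
      have := LinearMap.congr_fun (hη (c.X (n + 1))) y
      simp only [LinearMap.add_apply, LinearMap.comp_apply, LinearMap.sub_apply,
        LinearMap.id_apply] at this
      exact eq_sub_of_add_eq' this
    ext x
    simp only [LinearMap.sub_apply, LinearMap.add_apply, LinearMap.smul_apply,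
      LinearMap.comp_apply, LinearMap.id_apply]
    rw [hCc, hηc]
    simp only [map_sub, pow_succ, mul_neg_one, neg_smul, smul_sub]
    abel
end Key

section Final
variable {R : Type u} [Ring R] {𝒳 : Type w} [Category 𝒳]
variable (CM : 𝒳 → GradedMod R)
  (Cmap : ∀ {A B : 𝒳}, (B ⟶ A) → ((CM B).carrier →ₗ[R] (CM A).carrier))
  (η : ∀ A : 𝒳, (CM A).carrier →ₗ[R] (CM A).carrier)
  (MΦ : 𝒳 → GradedMod R)
  (j : ∀ A : 𝒳, (MΦ A).carrier →ₗ[R] (CM A).carrier)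
  (q : ∀ A : 𝒳, (CM A).carrier →ₗ[R] (MΦ A).carrier)

/-- The Eilenberg–MacLane operations. -/
def opL (p : ℕ) (c : Chain 𝒳) : (MΦ (c.X p)).carrier →ₗ[R] (MΦ (c.X 0)).carrier :=
  (q (c.X 0)).comp ((emMid CM Cmap η p c).comp (j (c.X p)))

lemma comp_sub' {M N P : GradedMod R} (f : N.carrier →ₗ[R] P.carrier)
    (g h : M.carrier →ₗ[R] N.carrier) : f.comp (g - h) = f.comp g - f.comp h := by
  ext x; simp

lemma comp_smul' {M N P : GradedMod R} (f : N.carrier →ₗ[R] P.carrier)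
    (a : ℤ) (g : M.carrier →ₗ[R] N.carrier) : f.comp (a • g) = a • (f.comp g) := by
  ext x; simp

lemma smul_comp' {M N P : GradedMod R} (a : ℤ) (f : N.carrier →ₗ[R] P.carrier)
    (g : M.carrier →ₗ[R] N.carrier) : (a • f).comp g = a • (f.comp g) := by
  ext x; simp

lemma sub_comp'' {M N P : GradedMod R} (f g : N.carrier →ₗ[R] P.carrier)
    (h : M.carrier →ₗ[R] N.carrier) : (f - g).comp h = f.comp h - g.comp h := by
  ext x; simp

-- claim 1 : the `j ∘ q` part of `keyTerm` gives the composite of two operations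
lemma claim1 (c : Chain 𝒳) (m i : ℕ) (h1 : 1 ≤ i) (h2 : i ≤ m) :
    (q (c.X 0)).comp
      (((emMid CM Cmap η i c).comp
        (((j (c.X i)).comp (q (c.X i))).comp
          ((mc CM (c.back_X_zero i)).comp
            ((emMid CM Cmap η (m + 1 - i) (c.back i)).comp (mcb CM c i (m + 1)))))).comp
        (j (c.X (m + 1))))
    = (opL CM Cmap η MΦ j q i c).comp
        (((mc MΦ (c.back_X_zero i)).comp (opL CM Cmap η MΦ j q (m + 1 - i) (c.back i))).comp
          (mcb MΦ c i (m + 1))) := by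
  unfold opL
  ext x
  simp only [LinearMap.comp_apply]
  rw [mcb_eq MΦ c (show i ≤ m + 1 by omega), mcb_eq CM c (show i ≤ m + 1 by omega),
    mc_nat_apply j (c.back_X i (m + 1) (show i ≤ m + 1 by omega)),
    ← mc_nat_apply q (c.back_X_zero i)]

-- claim 2 : the `id` part of `keyTerm` gives the deleted-face operation
lemma claim2 (c : Chain 𝒳) (m i : ℕ)
    (hC_comp : ∀ (A B C' : 𝒳) (f : B ⟶ A) (g : C' ⟶ B),
      Cmap (g ≫ f) = (Cmap f).comp (Cmap g))
    (h1 : 1 ≤ i) (h2 : i ≤ m) :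
    (q (c.X 0)).comp
      (((emMid CM Cmap η i c).comp
        ((mc CM (c.back_X_zero i)).comp
          ((emMid CM Cmap η (m + 1 - i) (c.back i)).comp (mcb CM c i (m + 1))))).comp
        (j (c.X (m + 1))))
    = (mcd0 MΦ c i).comp
        ((opL CM Cmap η MΦ j q m (c.del i)).comp (mcdt MΦ c i m)) := by
  unfold opL
  ext x
  simp only [LinearMap.comp_apply]
  rw [mcb_eq CM c (show i ≤ m + 1 by omega), mcd0_eq MΦ c h1, mcdt_eq MΦ c h2,
    mc_nat_apply j (c.del_X_top i m h2),
    emMid_congrIdx_apply CM Cmap η (c.del i) (show i + (m - i) = m by omega),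
    emMid_congrIdx_apply CM Cmap η (c.back i) (show (m - i) + 1 = m + 1 - i by omega)]
  simp only [show ∀ y, mc CM (c.back_X_zero i) y = y from fun _ => rfl]
  rw [emMid_del CM Cmap η hC_comp (m - i) i h1 c,
    mc_nat_apply q (c.del_X_zero i h1)]
  simp only [mc_mc_apply]

lemma h3term (c : Chain 𝒳) (m i : ℕ)
    (hC_comp : ∀ (A B C' : 𝒳) (f : B ⟶ A) (g : C' ⟶ B),
      Cmap (g ≫ f) = (Cmap f).comp (Cmap g))
    (h1 : 1 ≤ i) (h2 : i ≤ m) :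
    (q (c.X 0)).comp ((keyTerm CM Cmap η MΦ j q c m i).comp (j (c.X (m + 1))))
    = -(((-1 : ℤ) ^ i) •
          ((opL CM Cmap η MΦ j q i c).comp
            (((mc MΦ (c.back_X_zero i)).comp
              (opL CM Cmap η MΦ j q (m + 1 - i) (c.back i))).comp (mcb MΦ c i (m + 1)))))
      + ((-1 : ℤ) ^ i) •
          ((mcd0 MΦ c i).comp
            ((opL CM Cmap η MΦ j q m (c.del i)).comp (mcdt MΦ c i m))) := by
  unfold keyTerm
  rw [LinearMap.smul_comp, comp_smul', LinearMap.sub_comp, LinearMap.comp_sub,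
    LinearMap.sub_comp, comp_sub', LinearMap.id_comp, smul_sub,
    claim1 CM Cmap η MΦ j q c m i h1 h2,
    claim2 CM Cmap η MΦ j q c m i hC_comp h1 h2, pow_succ, mul_neg_one, neg_smul,
    neg_smul, sub_neg_eq_add]
end Final

section Final2
variable {R : Type u} [Ring R] {𝒳 : Type w} [Category 𝒳]
variable (CM : 𝒳 → GradedMod R)
  (Cmap : ∀ {A B : 𝒳}, (B ⟶ A) → ((CM B).carrier →ₗ[R] (CM A).carrier))
  (η : ∀ A : 𝒳, (CM A).carrier →ₗ[R] (CM A).carrier)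
  (MΦ : 𝒳 → GradedMod R)
  (j : ∀ A : 𝒳, (MΦ A).carrier →ₗ[R] (CM A).carrier)
  (q : ∀ A : 𝒳, (CM A).carrier →ₗ[R] (MΦ A).carrier)

lemma comp_sum' {ι : Type*} (s : Finset ι) {M N P : GradedMod R}
    (f : ι → M.carrier →ₗ[R] N.carrier) (g : N.carrier →ₗ[R] P.carrier) :
    g.comp (∑ i ∈ s, f i) = ∑ i ∈ s, g.comp (f i) := by
  ext x; simp [LinearMap.sum_apply, map_sum]

lemma attach_sum_conv {β : Type*} [AddCommMonoid β] (s : Finset ℕ)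
    (f : {x // x ∈ s} → β) (g : ℕ → β) (h : ∀ i : {x // x ∈ s}, f i = g i.1) :
    ∑ i ∈ s.attach, f i = ∑ i ∈ s, g i :=
  (Finset.sum_congr rfl fun i _ => h i).trans (Finset.sum_attach s g)

lemma emMid_deg
    (hC_deg : ∀ (A B : 𝒳) (f : B ⟶ A), HasDeg 0 (Cmap f))
    (hη_deg : ∀ A : 𝒳, HasDeg 1 (η A)) :
    ∀ (p : ℕ) (c : Chain 𝒳), 1 ≤ p → HasDeg ((p : ℤ) - 1) (emMid CM Cmap η p c)
  | 0, c, hp => absurd hp (by omega)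
  | 1, c, _ => (hC_deg _ _ (c.f 0)).congr (by norm_num)
  | (p + 2), c, _ => by
    have h1 := HasDeg.comp' (emMid_deg hC_deg hη_deg (p + 1) c (by omega))
      (HasDeg.comp' (hη_deg (c.X (p + 1))) (hC_deg _ _ (c.f (p + 1))))
    rw [emMid_succ CM Cmap η (p + 1) (by omega) c]
    exact h1.congr (by push_cast; ring)

lemma relation_plain
    (dC : ∀ A : 𝒳, (CM A).carrier →ₗ[R] (CM A).carrier)
    (hC_comp : ∀ (A B C' : 𝒳) (f : B ⟶ A) (g : C' ⟶ B),
      Cmap (g ≫ f) = (Cmap f).comp (Cmap g))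
    (hC_chain : ∀ (A B : 𝒳) (f : B ⟶ A),
      (dC A).comp (Cmap f) = (Cmap f).comp (dC B))
    (dΦ : ∀ A : 𝒳, (MΦ A).carrier →ₗ[R] (MΦ A).carrier)
    (hj_chain : ∀ A : 𝒳, (dC A).comp (j A) = (j A).comp (dΦ A))
    (hq_chain : ∀ A : 𝒳, (dΦ A).comp (q A) = (q A).comp (dC A))
    (hη : ∀ A : 𝒳,
      (dC A).comp (η A) + (η A).comp (dC A) = (j A).comp (q A) - LinearMap.id)
    (m : ℕ) (c : Chain 𝒳) :
    (dΦ (c.X 0)).comp (opL CM Cmap η MΦ j q (m + 1) c)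
      + ∑ i ∈ Finset.Ico 1 (m + 1),
          ((-1 : ℤ) ^ i) •
            ((opL CM Cmap η MΦ j q i c).comp
              (((mc MΦ (c.back_X_zero i)).comp
                (opL CM Cmap η MΦ j q (m + 1 - i) (c.back i))).comp (mcb MΦ c i (m + 1))))
      + ((-1 : ℤ) ^ (m + 1)) •
          ((opL CM Cmap η MΦ j q (m + 1) c).comp (dΦ (c.X (m + 1))))
    = ∑ i ∈ Finset.Ico 1 (m + 1),
        ((-1 : ℤ) ^ i) •
          ((mcd0 MΦ c i).comp
            ((opL CM Cmap η MΦ j q m (c.del i)).comp (mcdt MΦ c i m))) := by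
  have hd1 : (dΦ (c.X 0)).comp (opL CM Cmap η MΦ j q (m + 1) c)
      = (q (c.X 0)).comp
          (((dC (c.X 0)).comp (emMid CM Cmap η (m + 1) c)).comp (j (c.X (m + 1)))) := by
    unfold opL
    ext x
    simp only [LinearMap.comp_apply]
    exact LinearMap.congr_fun (hq_chain (c.X 0)) _
  have hd2 : (opL CM Cmap η MΦ j q (m + 1) c).comp (dΦ (c.X (m + 1)))
      = (q (c.X 0)).comp
          (((emMid CM Cmap η (m + 1) c).comp (dC (c.X (m + 1)))).comp (j (c.X (m + 1)))) := by
    unfold opL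
    ext x
    simp only [LinearMap.comp_apply]
    exact congrArg (fun z => q (c.X 0) (emMid CM Cmap η (m + 1) c z))
      (LinearMap.congr_fun (hj_chain (c.X (m + 1))) x).symm
  have hkey2 := congrArg
    (fun T : (CM (c.X (m + 1))).carrier →ₗ[R] (CM (c.X 0)).carrier =>
      (q (c.X 0)).comp (T.comp (j (c.X (m + 1)))))
    (key_relation CM Cmap η MΦ j q dC hC_chain hη m c)
  rw [LinearMap.sub_comp, LinearMap.smul_comp, comp_sub', comp_smul',
    sum_comp', comp_sum',
    Finset.sum_congr rfl (fun i hi => h3term CM Cmap η MΦ j q c m i hC_comp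
      (Finset.mem_Ico.mp hi).1 (by have := (Finset.mem_Ico.mp hi).2; omega)),
    Finset.sum_add_distrib, Finset.sum_neg_distrib, sub_eq_iff_eq_add] at hkey2
  rw [hd1, hd2, hkey2, pow_succ, mul_neg_one, neg_smul]
  abel

end Final2

/-- Let `C` be a functor from `𝒳` to chain complexes of
`R`-modules, and for each object `X` let `ΦX` be a chain complex together
with chain maps `j_X : ΦX → C(X)`, `q_X : C(X) → ΦX` and a degree `+1` map
`η_X` with `d ∘ η_X + η_X ∘ d = j_X ∘ q_X - id`.  Then the Eilenberg–MacLane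
data `Φ_p(f₁,…,f_p) = q_{X₀} ∘ C(f₁) ∘ η_{X₁} ∘ C(f₂) ∘ ⋯ ∘ η_{X_{p-1}} ∘
C(f_p) ∘ j_{X_p}` (with `Φ₀(X)` the differential of `ΦX`) is an `A∞`
functor on `𝒳`. -/
theorem statement5
    -- the functor `C` to chain complexes:
    (CM : 𝒳 → GradedMod R)
    (dC : ∀ A : 𝒳, (CM A).carrier →ₗ[R] (CM A).carrier)
    (hdC_deg : ∀ A : 𝒳, HasDeg (-1) (dC A))
    (hdC_sq : ∀ A : 𝒳, (dC A).comp (dC A) = 0)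
    (Cmap : ∀ {A B : 𝒳}, (B ⟶ A) → ((CM B).carrier →ₗ[R] (CM A).carrier))
    (hC_id : ∀ A : 𝒳, Cmap (𝟙 A) = LinearMap.id)
    (hC_comp : ∀ (A B C' : 𝒳) (f : B ⟶ A) (g : C' ⟶ B),
      Cmap (g ≫ f) = (Cmap f).comp (Cmap g))
    (hC_deg : ∀ (A B : 𝒳) (f : B ⟶ A), HasDeg 0 (Cmap f))
    (hC_chain : ∀ (A B : 𝒳) (f : B ⟶ A),
      (dC A).comp (Cmap f) = (Cmap f).comp (dC B))
    -- the homotopy equivalent complexes `ΦX`: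
    (MΦ : 𝒳 → GradedMod R)
    (dΦ : ∀ A : 𝒳, (MΦ A).carrier →ₗ[R] (MΦ A).carrier)
    (hdΦ_deg : ∀ A : 𝒳, HasDeg (-1) (dΦ A))
    (hdΦ_sq : ∀ A : 𝒳, (dΦ A).comp (dΦ A) = 0)
    (j : ∀ A : 𝒳, (MΦ A).carrier →ₗ[R] (CM A).carrier)
    (q : ∀ A : 𝒳, (CM A).carrier →ₗ[R] (MΦ A).carrier)
    (hj_deg : ∀ A : 𝒳, HasDeg 0 (j A))
    (hq_deg : ∀ A : 𝒳, HasDeg 0 (q A))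
    (hj_chain : ∀ A : 𝒳, (dC A).comp (j A) = (j A).comp (dΦ A))
    (hq_chain : ∀ A : 𝒳, (dΦ A).comp (q A) = (q A).comp (dC A))
    (η : ∀ A : 𝒳, (CM A).carrier →ₗ[R] (CM A).carrier)
    (hη_deg : ∀ A : 𝒳, HasDeg 1 (η A))
    (hη : ∀ A : 𝒳,
      (dC A).comp (η A) + (η A).comp (dC A) = (j A).comp (q A) - LinearMap.id) :
    IsAInfty
      { M := MΦ
        d := dΦ
        op := fun p c => (q (c.X 0)).comp ((emMid CM Cmap η p c).comp (j (c.X p)))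
        : AInftyData R 𝒳 } := by
  refine ⟨hdΦ_deg, hdΦ_sq, ?_, ?_, ?_⟩
  · intro p c hp
    exact (HasDeg.comp' (hq_deg (c.X 0))
      (HasDeg.comp' (emMid_deg CM Cmap η hC_deg hη_deg p c hp) (hj_deg (c.X p)))).congr
      (by ring)
  · intro p hp c c' hX hf
    ext x
    show q (c'.X 0) (emMid CM Cmap η p c' (j (c'.X p) x)) = _
    rw [emMid_ext CM Cmap η p c c' hX hf]
    simp only [LinearMap.comp_apply]
    rw [mc_nat_apply q (hX 0 (Nat.zero_le p)), mc_nat_apply j ((hX p (le_refl p)).symm)]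
  · intro m c
    have main := relation_plain CM Cmap η MΦ j q dC hC_comp hC_chain dΦ hj_chain hq_chain hη m c
    convert main using 2
    · refine congrArg₂ (· + ·) rfl ?_
      refine attach_sum_conv _ _ _ (fun i => ?_)
      have hb := Finset.mem_Ico.mp i.2
      rw [mcb_eq MΦ c (show i.1 ≤ m + 1 by omega)]
      exact LinearMap.ext fun x => rfl
    · rfl
    · refine attach_sum_conv _ _ _ (fun i => ?_)
      have hb := Finset.mem_Ico.mp i.2
      rw [mcd0_eq MΦ c (show 1 ≤ i.1 by omega), mcdt_eq MΦ c (show i.1 ≤ m by omega)]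
      exact LinearMap.ext fun x => rfl


end EilenbergMacLane
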